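/- Let ρ and σ be quantum states on ℂ^d with supp(ρ) = supp(σ). Let m ≥ 1, t₁,…,t_m ∈ [0,1] and w₁,…,w_m > 0 be such that (1/ln 2)·Σ_{j=1}^m w_j f_{t_j}(x) ≥ log₂ x for all x > 0. If real numbers D̂₁,…,D̂_m satisfy D̂_j ≥ D_{f_{t_j}}(ρ‖σ) for every j, then D(ρ‖σ) ≥ −Σ_{j=1}^m (w_j/ln 2)·D̂_j; that is, the weighted estimate is a rigorous lower bound on the quantum relative entropy. -/

import Mathlib

/-!
Both `D_f(ρ‖σ)` and `D(ρ‖σ)` are sums `Σ_{j,k} F(η_j, μ_k) |⟨u_j, v_k⟩|²` over the eigenpairs of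
`ρ` and `σ` with positive eigenvalues, with `F(a, b) = a f(b/a)` and `F(a, b) = a log₂(a/b)`
respectively. Such sums are linear in `F` and monotone in `F` on `(0,∞)²`, and the quadrature
hypothesis at `x = b/a`, multiplied by `a > 0`, is exactly the pointwise inequality between the two
integrands.
-/

noncomputable section

namespace QRE

open scoped ComplexOrder

open Matrix

variable {d : ℕ}

/-- The rank-one projector `|u⟩⟨u|` associated with a vector `u ∈ ℂ^d`. -/
def rankOne (u : EuclideanSpace ℂ (Fin d)) : Matrix (Fin d) (Fin d) ℂ :=
  Matrix.of fun i j => u i * (starRingEnd ℂ) (u j)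

/-- Functional calculus on the support of a Hermitian matrix: apply `g` to the
positive eigenvalues, and `0` to the rest. -/
def matFun (g : ℝ → ℝ) {A : Matrix (Fin d) (Fin d) ℂ} (hA : A.IsHermitian) :
    Matrix (Fin d) (Fin d) ℂ :=
  ∑ j, (if 0 < hA.eigenvalues j then (g (hA.eigenvalues j) : ℂ) else 0) •
    rankOne (hA.eigenvectorBasis j)

/-- The orthogonal projection onto the support (column space) of a Hermitian matrix. -/
def suppProj {A : Matrix (Fin d) (Fin d) ℂ} (hA : A.IsHermitian) :
    Matrix (Fin d) (Fin d) ℂ :=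
  matFun (fun _ => 1) hA

/-- The standard quantum `f`-divergence (for `supp ρ ⊆ supp σ`, where the `f(0⁺)` term
vanishes): `D_f(ρ‖σ) = Σ_{j : η_j > 0} Σ_{k : μ_k > 0} η_j f(μ_k/η_j) tr[P_j Q_k]`. -/
def Df (f : ℝ → ℝ) {ρ σ : Matrix (Fin d) (Fin d) ℂ}
    (hρ : ρ.IsHermitian) (hσ : σ.IsHermitian) : ℝ :=
  ∑ j, ∑ k,
    if 0 < hρ.eigenvalues j ∧ 0 < hσ.eigenvalues k then
      hρ.eigenvalues j * f (hσ.eigenvalues k / hρ.eigenvalues j) *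
        (Matrix.trace (rankOne (hρ.eigenvectorBasis j) *
          rankOne (hσ.eigenvectorBasis k))).re
    else 0

/-- `f_t(x) = (x-1)/(t(x-1)+1)`. -/
def ft (t x : ℝ) : ℝ := (x - 1) / (t * (x - 1) + 1)

/-- A quantum state: positive semidefinite with unit trace. -/
def IsState (ρ : Matrix (Fin d) (Fin d) ℂ) : Prop := ρ.PosSemidef ∧ ρ.trace = 1

/-- The Umegaki relative entropy `tr[ρ (log₂ ρ − log₂ σ)]` (logs on the supports). -/
def relEnt {ρ σ : Matrix (Fin d) (Fin d) ℂ} (hρ : ρ.IsHermitian) (hσ : σ.IsHermitian) : ℝ :=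
  (Matrix.trace (ρ * (matFun (Real.logb 2) hρ - matFun (Real.logb 2) hσ))).re

/-- `Q_α(ρ‖σ) = tr[ρ^α σ^{1-α}]`, matrix powers by functional calculus on the support. -/
def Qalpha (α : ℝ) {ρ σ : Matrix (Fin d) (Fin d) ℂ}
    (hρ : ρ.IsHermitian) (hσ : σ.IsHermitian) : ℝ :=
  (Matrix.trace (matFun (fun y => y ^ α) hρ * matFun (fun y => y ^ (1 - α)) hσ)).re

/-- `Q₀(ρ‖σ) = tr[ρ⁰ σ]`. -/
def Qzero {ρ : Matrix (Fin d) (Fin d) ℂ} (hρ : ρ.IsHermitian)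
    (σ : Matrix (Fin d) (Fin d) ℂ) : ℝ :=
  (Matrix.trace (suppProj hρ * σ)).re

/-- `Q₂(ρ‖σ) = tr[ρ² σ⁺]`, with `σ⁺` the Moore–Penrose pseudo-inverse of `σ`. -/
def Qtwo (ρ : Matrix (Fin d) (Fin d) ℂ) {σ : Matrix (Fin d) (Fin d) ℂ}
    (hσ : σ.IsHermitian) : ℝ :=
  (Matrix.trace (ρ * ρ * matFun (fun y => y⁻¹) hσ)).re

open scoped InnerProductSpace

lemma rankOne_mulVec (u x : EuclideanSpace ℂ (Fin d)) :
    rankOne u *ᵥ x.ofLp = ⟪u, x⟫_ℂ • u.ofLp := by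
  ext i
  simp only [rankOne, mulVec, dotProduct, of_apply, PiLp.inner_apply, RCLike.inner_apply,
    Pi.smul_apply, smul_eq_mul, Finset.sum_mul]
  exact Finset.sum_congr rfl fun l _ => by ring

lemma trace_rankOne_mul_rankOne (u v : EuclideanSpace ℂ (Fin d)) :
    trace (rankOne u * rankOne v) = ((‖⟪u, v⟫_ℂ‖ ^ 2 : ℝ) : ℂ) := by
  rw [Complex.ofReal_pow, ← Complex.mul_conj', inner_conj_symm]
  simp only [trace, diag, mul_apply, rankOne, of_apply, PiLp.inner_apply, RCLike.inner_apply,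
    starRingEnd_apply, Finset.sum_mul_sum]
  rw [Finset.sum_comm]
  exact Finset.sum_congr rfl fun i _ => Finset.sum_congr rfl fun l _ => by ring

lemma eq_sum_eigenvalues_smul_rankOne {A : Matrix (Fin d) (Fin d) ℂ} (hA : A.IsHermitian) :
    A = ∑ j, (hA.eigenvalues j : ℂ) • rankOne (hA.eigenvectorBasis j) := by
  apply toEuclideanLin.injective
  refine hA.eigenvectorBasis.toBasis.ext fun j => WithLp.ofLp_injective 2 ?_
  simp only [OrthonormalBasis.coe_toBasis, ofLp_toLpLin, toLin'_apply, sum_mulVec, smul_mulVec]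
  simp only [rankOne_mulVec, orthonormal_iff_ite.mp hA.eigenvectorBasis.orthonormal, ite_smul,
    one_smul, zero_smul, smul_ite, smul_zero, Finset.sum_ite_eq', Finset.mem_univ, if_true]
  rw [hA.mulVec_eigenvectorBasis, Complex.coe_smul]

lemma ofLp_eigenvectorBasis_mem_range {A : Matrix (Fin d) (Fin d) ℂ} (hA : A.IsHermitian)
    {j : Fin d} (hj : hA.eigenvalues j ≠ 0) :
    (hA.eigenvectorBasis j).ofLp ∈ LinearMap.range A.mulVecLin := by
  refine ⟨((hA.eigenvalues j : ℂ)⁻¹) • (hA.eigenvectorBasis j).ofLp, ?_⟩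
  rw [mulVecLin_apply, mulVec_smul, hA.mulVec_eigenvectorBasis,
    ← Complex.coe_smul, smul_smul, inv_mul_cancel₀ (by exact_mod_cast hj), one_smul]

lemma inner_eigenvectorBasis_eq_zero_of_mem_range {A : Matrix (Fin d) (Fin d) ℂ}
    (hA : A.IsHermitian) {k : Fin d} (hk : hA.eigenvalues k = 0) {x : EuclideanSpace ℂ (Fin d)}
    (hx : x.ofLp ∈ LinearMap.range A.mulVecLin) : ⟪hA.eigenvectorBasis k, x⟫_ℂ = 0 := by
  obtain ⟨y, hy⟩ := hx
  have hker : star (hA.eigenvectorBasis k).ofLp ᵥ* A = 0 := by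
    have h := star_mulVec A (hA.eigenvectorBasis k).ofLp
    rw [hA.eq] at h
    rw [← h, hA.mulVec_eigenvectorBasis, hk, zero_smul, star_zero]
  rw [EuclideanSpace.inner_eq_star_dotProduct, ← hy, mulVecLin_apply, dotProduct_comm,
    dotProduct_mulVec, hker, zero_dotProduct]

lemma sum_pos_eigenvalues_norm_inner_sq_of_mem_range {σ : Matrix (Fin d) (Fin d) ℂ}
    (hσ : σ.PosSemidef) {x : EuclideanSpace ℂ (Fin d)}
    (hx : x.ofLp ∈ LinearMap.range σ.mulVecLin) :
    ∑ k, (if 0 < hσ.1.eigenvalues k then ‖⟪x, hσ.1.eigenvectorBasis k⟫_ℂ‖ ^ 2 else 0) =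
      ‖x‖ ^ 2 := by
  rw [← hσ.1.eigenvectorBasis.sum_sq_norm_inner_left x]
  refine Finset.sum_congr rfl fun k _ => ?_
  split_ifs with hk
  · rfl
  · have hk0 : hσ.1.eigenvalues k = 0 := le_antisymm (not_lt.mp hk) (hσ.eigenvalues_nonneg k)
    rw [← inner_conj_symm, inner_eigenvectorBasis_eq_zero_of_mem_range hσ.1 hk0 hx]
    simp

section

variable {ρ σ : Matrix (Fin d) (Fin d) ℂ}

lemma re_trace_mul_matFun (g : ℝ → ℝ) (hρ : ρ.IsHermitian) (hσ : σ.IsHermitian) :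
    (trace (ρ * matFun g hσ)).re =
      ∑ j, ∑ k, if 0 < hσ.eigenvalues k then
        hρ.eigenvalues j * g (hσ.eigenvalues k) *
          ‖⟪hρ.eigenvectorBasis j, hσ.eigenvectorBasis k⟫_ℂ‖ ^ 2 else 0 := by
  conv_lhs => rw [eq_sum_eigenvalues_smul_rankOne hρ]
  rw [matFun, Finset.sum_mul]
  simp only [Finset.mul_sum, Matrix.smul_mul, Matrix.mul_smul, trace_sum, trace_smul,
    trace_rankOne_mul_rankOne, smul_smul, Complex.re_sum]
  refine Finset.sum_congr rfl fun j _ => Finset.sum_congr rfl fun k _ => ?_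
  split_ifs
  · simp only [smul_eq_mul, ← Complex.ofReal_mul, Complex.ofReal_re]
    ring
  · simp

def overlapSum (F : ℝ → ℝ → ℝ) (hρ : ρ.IsHermitian) (hσ : σ.IsHermitian) : ℝ :=
  ∑ j, ∑ k,
    if 0 < hρ.eigenvalues j ∧ 0 < hσ.eigenvalues k then
      F (hρ.eigenvalues j) (hσ.eigenvalues k) *
        ‖⟪hρ.eigenvectorBasis j, hσ.eigenvectorBasis k⟫_ℂ‖ ^ 2
    else 0

section overlapSum

variable (hρ : ρ.IsHermitian) (hσ : σ.IsHermitian)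

lemma Df_eq_overlapSum (f : ℝ → ℝ) :
    Df f hρ hσ = overlapSum (fun a b => a * f (b / a)) hρ hσ := by
  simp only [Df, overlapSum, trace_rankOne_mul_rankOne, Complex.ofReal_re]

lemma overlapSum_mono {F G : ℝ → ℝ → ℝ} (h : ∀ a b, 0 < a → 0 < b → F a b ≤ G a b) :
    overlapSum F hρ hσ ≤ overlapSum G hρ hσ := by
  refine Finset.sum_le_sum fun j _ => Finset.sum_le_sum fun k _ => ?_
  split_ifs with hjk
  · exact mul_le_mul_of_nonneg_right (h _ _ hjk.1 hjk.2) (by positivity)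
  · exact le_rfl

lemma overlapSum_sum_mul {ι : Type*} [Fintype ι] (c : ι → ℝ) (F : ι → ℝ → ℝ → ℝ) :
    overlapSum (fun a b => ∑ i, c i * F i a b) hρ hσ = ∑ i, c i * overlapSum (F i) hρ hσ := by
  simp only [overlapSum, Finset.mul_sum]
  symm
  rw [Finset.sum_comm]
  refine Finset.sum_congr rfl fun j _ => ?_
  rw [Finset.sum_comm]
  refine Finset.sum_congr rfl fun k _ => ?_
  split_ifs <;> simp [Finset.sum_mul, mul_assoc]

end overlapSum

lemma re_trace_mul_matFun_eq_overlapSum (g : ℝ → ℝ) (hρ : ρ.PosSemidef) (hσ : σ.IsHermitian) :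
    (trace (ρ * matFun g hσ)).re = overlapSum (fun a b => a * g b) hρ.1 hσ := by
  rw [re_trace_mul_matFun _ hρ.1]
  refine Finset.sum_congr rfl fun j _ => Finset.sum_congr rfl fun k _ => ?_
  rcases (hρ.eigenvalues_nonneg j).lt_or_eq with hj | hj
  · simp [hj]
  · simp [← hj]

lemma re_trace_mul_matFun_self (g : ℝ → ℝ) (hρ : ρ.PosSemidef) (hσ : σ.PosSemidef)
    (hsupp : LinearMap.range ρ.mulVecLin ≤ LinearMap.range σ.mulVecLin) :
    (trace (ρ * matFun g hρ.1)).re = overlapSum (fun a _ => a * g a) hρ.1 hσ.1 := by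
  rw [re_trace_mul_matFun _ hρ.1]
  refine Finset.sum_congr rfl fun j _ => ?_
  simp only [orthonormal_iff_ite.mp hρ.1.eigenvectorBasis.orthonormal]
  rw [Finset.sum_eq_single j (fun k _ hk => by simp [Ne.symm hk]) (by simp)]
  by_cases hj : 0 < hρ.1.eigenvalues j
  -- `u_j ∈ supp ρ ⊆ supp σ`, so its overlaps with the eigenvectors of `σ` on `supp σ` sum to 1.
  · have hcomplete := sum_pos_eigenvalues_norm_inner_sq_of_mem_range hσ
      (hsupp (ofLp_eigenvectorBasis_mem_range hρ.1 hj.ne'))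
    rw [hρ.1.eigenvectorBasis.orthonormal.1 j, one_pow] at hcomplete
    simp only [hj, true_and, if_true, norm_one, one_pow, mul_one]
    conv_lhs => rw [← mul_one (_ * _), ← hcomplete, Finset.mul_sum]
    simp only [mul_ite, mul_zero]
  · simp [hj]

lemma relEnt_eq_overlapSum (hρ : ρ.PosSemidef) (hσ : σ.PosSemidef)
    (hsupp : LinearMap.range ρ.mulVecLin ≤ LinearMap.range σ.mulVecLin) :
    relEnt hρ.1 hσ.1 = overlapSum (fun a b => a * Real.logb 2 (a / b)) hρ.1 hσ.1 := by
  rw [relEnt, mul_sub, trace_sub, Complex.sub_re, re_trace_mul_matFun_self _ hρ hσ hsupp,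
    re_trace_mul_matFun_eq_overlapSum _ hρ, overlapSum, overlapSum, overlapSum,
    ← Finset.sum_sub_distrib]
  refine Finset.sum_congr rfl fun j _ => ?_
  rw [← Finset.sum_sub_distrib]
  refine Finset.sum_congr rfl fun k _ => ?_
  split_ifs with h
  · rw [Real.logb_div h.1.ne' h.2.ne']
    ring
  · simp

end

theorem lower_bound_relEnt_general (ρ σ : Matrix (Fin d) (Fin d) ℂ)
    (hρ : IsState ρ) (hσ : IsState σ)
    (hsupp : LinearMap.range ρ.mulVecLin = LinearMap.range σ.mulVecLin)
    (m : ℕ) (t w : Fin m → ℝ)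
    (hw : ∀ j, 0 < w j)
    (happrox : ∀ x > (0 : ℝ),
      Real.logb 2 x ≤ (1 / Real.log 2) * ∑ j, w j * ft (t j) x)
    (Dhat : Fin m → ℝ)
    (hest : ∀ j, Df (ft (t j)) hρ.1.1 hσ.1.1 ≤ Dhat j) :
    -∑ j, (w j / Real.log 2) * Dhat j ≤ relEnt hρ.1.1 hσ.1.1 := by
  have hpointwise (a b : ℝ) (ha : 0 < a) (_ : 0 < b) :
      ∑ i, -(w i / Real.log 2) * (a * ft (t i) (b / a)) ≤ a * Real.logb 2 (a / b) := by
    have h := happrox (b / a) (by positivity)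
    calc ∑ i, -(w i / Real.log 2) * (a * ft (t i) (b / a))
        = a * -((1 / Real.log 2) * ∑ i, w i * ft (t i) (b / a)) := by
          simp only [Finset.mul_sum, ← Finset.sum_neg_distrib]
          exact Finset.sum_congr rfl fun i _ => by ring
      _ ≤ a * -Real.logb 2 (b / a) := by gcongr
      _ = a * Real.logb 2 (a / b) := by rw [← Real.logb_inv, inv_div]
  calc -∑ j, (w j / Real.log 2) * Dhat j
      = ∑ i, -(w i / Real.log 2) * Dhat i := by simp only [neg_mul, Finset.sum_neg_distrib]
    _ ≤ ∑ i, -(w i / Real.log 2) * Df (ft (t i)) hρ.1.1 hσ.1.1 := by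
      have hlog2 : 0 < Real.log 2 := Real.log_pos one_lt_two
      exact Finset.sum_le_sum fun i _ =>
        mul_le_mul_of_nonpos_left (hest i) (neg_nonpos.mpr (div_pos (hw i) hlog2).le)
    _ = overlapSum (fun a b => ∑ i, -(w i / Real.log 2) * (a * ft (t i) (b / a)))
          hρ.1.1 hσ.1.1 := by
      simp only [Df_eq_overlapSum, overlapSum_sum_mul]
    _ ≤ overlapSum (fun a b => a * Real.logb 2 (a / b)) hρ.1.1 hσ.1.1 :=
      overlapSum_mono _ _ hpointwise
    _ = relEnt hρ.1.1 hσ.1.1 := (relEnt_eq_overlapSum hρ.1 hσ.1 hsupp.le).symm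

/-- Rigorous lower bound on the quantum relative entropy: if the quadrature
overestimates `log₂` and the `D̂_j` overestimate the `f_{t_j}`-divergences, then
`D(ρ‖σ) ≥ −Σ_j (w_j/ln 2) D̂_j`. -/
theorem lower_bound_relEnt (ρ σ : Matrix (Fin d) (Fin d) ℂ)
    (hρ : IsState ρ) (hσ : IsState σ)
    (hsupp : LinearMap.range ρ.mulVecLin = LinearMap.range σ.mulVecLin)
    (m : ℕ) (hm : 1 ≤ m) (t w : Fin m → ℝ)
    (ht : ∀ j, t j ∈ Set.Icc (0 : ℝ) 1) (hw : ∀ j, 0 < w j)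
    (happrox : ∀ x > (0 : ℝ),
      Real.logb 2 x ≤ (1 / Real.log 2) * ∑ j, w j * ft (t j) x)
    (Dhat : Fin m → ℝ)
    (hest : ∀ j, Df (ft (t j)) hρ.1.1 hσ.1.1 ≤ Dhat j) :
    -∑ j, (w j / Real.log 2) * Dhat j ≤ relEnt hρ.1.1 hσ.1.1 :=
  lower_bound_relEnt_general ρ σ hρ hσ hsupp m t w hw happrox Dhat hest

end QRE
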